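/- arXiv:1801.00070 — 2 statements merged into one kernel-verified Lean document; each statement's English description precedes it below -/
import Mathlib

section
/- There exists a positive definite homogeneous polynomial V in three variables that is not a sum of squares; for example V(x₁,x₂,x₃) = x₁⁴x₂² + x₁²x₂⁴ − 3x₁²x₂²x₃² + x₃⁶ + (1/250)(x₁² + x₂² + x₃²)³ is positive definite but not a sum of squares of polynomials. -/
/-!
The Motzkin form `M = x⁴y² + x²y⁴ - 3x²y²z² + z⁶` is nonnegative because `(x² + y²) M` is a
sum of three squares, so `M + ε (x² + y² + z²)³` is positive definite for every `ε > 0`.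

If a form `V` of degree `2d` is a sum of squares `∑ qᵢ²`, comparing the homogeneous
components of top degree shows that no `qᵢ` has degree above `d`, so `V = ∑ rᵢ²` with `rᵢ` the
degree-`d` components. For `V = M + ε (x² + y² + z²)³` this is refuted by a linear functional
`L`, a weighted sum of thirteen point evaluations: for a cubic form `r`, `L (r²)` is an explicit
sum of squares of linear forms in the coefficients of `r`, while `L V = -4/9 + 896 ε / 9`,
which is negative for `ε < 1/224`.
-/

open MvPolynomial

/-- A polynomial is a sum of squares if it is a finite sum of squares of polynomials. -/
def IsSOS {n : ℕ} (p : MvPolynomial (Fin n) ℝ) : Prop :=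
  ∃ (m : ℕ) (q : Fin m → MvPolynomial (Fin n) ℝ), p = ∑ i, (q i) ^ 2

namespace MvPolynomial

section CommSemiring

variable {σ R : Type*} [CommSemiring R]

theorem homogeneousComponent_totalDegree_ne_zero {p : MvPolynomial σ R} (hp : p ≠ 0) :
    homogeneousComponent p.totalDegree p ≠ 0 := by
  obtain ⟨μ, hμ, hdeg⟩ := Finset.exists_mem_eq_sup p.support (support_nonempty.mpr hp)
    fun s => s.sum fun _ e => e
  have hdeg' : μ.degree = p.totalDegree := hdeg.symm
  intro h
  have hcoeff := congrArg (coeff μ) h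
  rw [coeff_homogeneousComponent, if_pos hdeg', coeff_zero] at hcoeff
  exact mem_support_iff.mp hμ hcoeff

theorem homogeneousComponent_two_mul_sq {p : MvPolynomial σ R} {d : ℕ}
    (hp : p.totalDegree ≤ d) :
    homogeneousComponent (2 * d) (p ^ 2) = homogeneousComponent d p ^ 2 := by
  have hsum : ∑ e ∈ Finset.range (d + 1), homogeneousComponent e p = p := by
    conv_rhs => rw [← sum_homogeneousComponent p]
    refine (Finset.sum_subset (Finset.range_subset_range.mpr (by omega)) fun e _ he => ?_).symm
    exact homogeneousComponent_eq_zero _ _ (by simp at he; omega)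
  -- `e₁ + e₂ = 2 * d` with `e₁, e₂ ≤ d` forces `e₁ = e₂ = d`.
  have hterm : ∀ e₁ ∈ Finset.range (d + 1), ∀ e₂ ∈ Finset.range (d + 1),
      homogeneousComponent (2 * d) (homogeneousComponent e₁ p * homogeneousComponent e₂ p) =
        if e₁ = d then if e₂ = d then homogeneousComponent d p ^ 2 else 0 else 0 := by
    intro e₁ he₁ e₂ he₂
    simp only [Finset.mem_range] at he₁ he₂
    rw [homogeneousComponent_of_mem ((homogeneousComponent_isHomogeneous e₁ p).mul
      (homogeneousComponent_isHomogeneous e₂ p))]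
    by_cases h : e₁ = d ∧ e₂ = d
    · rw [if_pos (by omega), if_pos h.1, if_pos h.2, h.1, h.2, sq]
    · rw [if_neg (by omega), ← ite_and, if_neg h]
  conv_lhs => rw [← hsum, sq, Finset.sum_mul_sum, map_sum]
  rw [Finset.sum_congr rfl fun e₁ he₁ => (map_sum _ _ _).trans
    (Finset.sum_congr rfl (hterm e₁ he₁))]
  simp

theorem IsHomogeneous.eq_sum_antidiagonalTuple {n d : ℕ} {p : MvPolynomial (Fin n) R}
    (hp : p.IsHomogeneous d) :
    p = ∑ f ∈ Finset.Nat.antidiagonalTuple n d,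
      monomial (Finsupp.equivFunOnFinite.symm f) (coeff (Finsupp.equivFunOnFinite.symm f) p) := by
  let e : (Fin n → ℕ) ↪ (Fin n →₀ ℕ) := Finsupp.equivFunOnFinite.symm.toEmbedding
  have hsupp : p.support ⊆ (Finset.Nat.antidiagonalTuple n d).map e := by
    intro μ hμ
    rw [Finset.mem_map_equiv, Finset.Nat.mem_antidiagonalTuple]
    change ∑ i, μ i = d
    rw [← Finsupp.degree_eq_sum, Finsupp.degree_eq_weight_one]
    exact hp (mem_support_iff.mp hμ)
  calc p = ∑ μ ∈ p.support, monomial μ (coeff μ p) := as_sum p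
    _ = ∑ μ ∈ (Finset.Nat.antidiagonalTuple n d).map e, monomial μ (coeff μ p) :=
      Finset.sum_subset hsupp fun μ _ hμ => by rw [notMem_support_iff.mp hμ, map_zero]
    _ = _ := Finset.sum_map _ e _

theorem IsHomogeneous.exists_eq_cubic {p : MvPolynomial (Fin 3) R} (hp : p.IsHomogeneous 3) :
    ∃ a b c d e f g h k j : R, p =
      C a * X 0 ^ 3 + C b * X 1 ^ 3 + C c * X 2 ^ 3 + C d * X 0 ^ 2 * X 1
      + C e * X 0 * X 1 ^ 2 + C f * X 0 ^ 2 * X 2 + C g * X 1 ^ 2 * X 2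
      + C h * X 0 * X 2 ^ 2 + C k * X 1 * X 2 ^ 2 + C j * X 0 * X 1 * X 2 := by
  let coeffOf (f : Fin 3 → ℕ) : R := coeff (Finsupp.equivFunOnFinite.symm f) p
  have hmonomial (f : Fin 3 → ℕ) (r : R) : monomial (Finsupp.equivFunOnFinite.symm f) r =
      C r * X 0 ^ f 0 * X 1 ^ f 1 * X 2 ^ f 2 := by
    rw [monomial_eq, Finsupp.prod_fintype _ _ fun _ => pow_zero _, Fin.prod_univ_three]
    simp [mul_assoc]
  have htuples : Finset.Nat.antidiagonalTuple 3 3 = {![3, 0, 0], ![0, 3, 0], ![0, 0, 3],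
      ![2, 1, 0], ![1, 2, 0], ![2, 0, 1], ![0, 2, 1], ![1, 0, 2], ![0, 1, 2], ![1, 1, 1]} := by
    decide
  refine ⟨coeffOf ![3, 0, 0], coeffOf ![0, 3, 0], coeffOf ![0, 0, 3], coeffOf ![2, 1, 0],
    coeffOf ![1, 2, 0], coeffOf ![2, 0, 1], coeffOf ![0, 2, 1], coeffOf ![1, 0, 2],
    coeffOf ![0, 1, 2], coeffOf ![1, 1, 1], ?_⟩
  conv_lhs => rw [hp.eq_sum_antidiagonalTuple, htuples]
  simp +decide only [Finset.sum_insert, Finset.mem_insert, Finset.mem_singleton,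
    Finset.sum_singleton]
  simp only [hmonomial, Matrix.cons_val, pow_zero, pow_one, mul_one]
  ring

end CommSemiring

section OrderedRing

variable {σ R : Type*} [CommRing R] [LinearOrder R] [IsStrictOrderedRing R]
  {ι : Type*} {s : Finset ι} {q : ι → MvPolynomial σ R}

theorem eq_zero_of_sum_sq_eq_zero (h : ∑ i ∈ s, q i ^ 2 = 0) : ∀ i ∈ s, q i = 0 := by
  intro i hi
  refine MvPolynomial.funext fun x => ?_
  have hx : ∑ j ∈ s, eval x (q j) ^ 2 = 0 := by simpa using congrArg (eval x) h
  simpa using (Finset.sum_eq_zero_iff_of_nonneg fun j _ => sq_nonneg _).mp hx i hi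

theorem totalDegree_le_of_isHomogeneous_sum_sq {V : MvPolynomial σ R} {d : ℕ}
    (hV : V.IsHomogeneous (2 * d)) (hq : V = ∑ i ∈ s, q i ^ 2) :
    ∀ i ∈ s, (q i).totalDegree ≤ d := by
  by_contra! ⟨i, hi, hid⟩
  obtain ⟨i₀, hi₀, hmax⟩ := s.exists_max_image (fun i => (q i).totalDegree) ⟨i, hi⟩
  set D := (q i₀).totalDegree
  have hdD : d < D := hid.trans_le (hmax i hi)
  have htop : ∑ i ∈ s, homogeneousComponent D (q i) ^ 2 = 0 := by
    have hV0 : homogeneousComponent (2 * D) V = 0 := by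
      rw [homogeneousComponent_of_mem hV, if_neg (by omega)]
    rw [← hV0, hq, map_sum]
    exact Finset.sum_congr rfl fun j hj => (homogeneousComponent_two_mul_sq (hmax j hj)).symm
  have hq₀ : q i₀ ≠ 0 := by
    rintro h
    simp [D, h] at hdD
  exact homogeneousComponent_totalDegree_ne_zero hq₀ (eq_zero_of_sum_sq_eq_zero htop i₀ hi₀)

theorem IsHomogeneous.eq_sum_sq_homogeneousComponent {V : MvPolynomial σ R} {d : ℕ}
    (hV : V.IsHomogeneous (2 * d)) (hq : V = ∑ i ∈ s, q i ^ 2) :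
    V = ∑ i ∈ s, homogeneousComponent d (q i) ^ 2 := by
  have hdeg := totalDegree_le_of_isHomogeneous_sum_sq hV hq
  calc V = homogeneousComponent (2 * d) V := (homogeneousComponent_eq_self hV).symm
    _ = ∑ i ∈ s, homogeneousComponent d (q i) ^ 2 := by
      rw [hq, map_sum]
      exact Finset.sum_congr rfl fun i hi => homogeneousComponent_two_mul_sq (hdeg i hi)

end OrderedRing

end MvPolynomial

theorem motzkin_nonneg {R : Type*} [CommRing R] [LinearOrder R] [IsStrictOrderedRing R]
    (x y z : R) : 0 ≤ x ^ 4 * y ^ 2 + x ^ 2 * y ^ 4 - 3 * x ^ 2 * y ^ 2 * z ^ 2 + z ^ 6 := by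
  have key : (x ^ 2 + y ^ 2) * (x ^ 4 * y ^ 2 + x ^ 2 * y ^ 4 - 3 * x ^ 2 * y ^ 2 * z ^ 2 + z ^ 6)
      = (x * y * (x ^ 2 + y ^ 2 - 2 * z ^ 2)) ^ 2 + (x * z * (y ^ 2 - z ^ 2)) ^ 2
        + (y * z * (x ^ 2 - z ^ 2)) ^ 2 := by ring
  rcases (add_nonneg (sq_nonneg x) (sq_nonneg y)).eq_or_lt with h | h
  · obtain ⟨rfl, rfl⟩ : x = 0 ∧ y = 0 := by
      constructor <;> nlinarith [sq_nonneg x, sq_nonneg y]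
    nlinarith [pow_two_nonneg (z ^ 3)]
  · exact nonneg_of_mul_nonneg_right (key ▸ by positivity) h

noncomputable def motzkin : MvPolynomial (Fin 3) ℝ :=
  X 0 ^ 4 * X 1 ^ 2 + X 0 ^ 2 * X 1 ^ 4 - 3 * X 0 ^ 2 * X 1 ^ 2 * X 2 ^ 2 + X 2 ^ 6

noncomputable def perturbedMotzkin (ε : ℝ) : MvPolynomial (Fin 3) ℝ :=
  motzkin + C ε * (X 0 ^ 2 + X 1 ^ 2 + X 2 ^ 2) ^ 3

theorem isHomogeneous_perturbedMotzkin (ε : ℝ) : (perturbedMotzkin ε).IsHomogeneous 6 := by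
  have hX := isHomogeneous_X_pow (R := ℝ) (σ := Fin 3)
  have h3 : (3 : MvPolynomial (Fin 3) ℝ).IsHomogeneous 0 := by
    rw [← map_ofNat C 3]
    exact isHomogeneous_C _ _
  have hmotzkin : motzkin.IsHomogeneous 6 :=
    ((((hX 0 4).mul (hX 1 2)).add ((hX 0 2).mul (hX 1 4))).sub
      (((h3.mul (hX 0 2)).mul (hX 1 2)).mul (hX 2 2))).add (hX 2 6)
  exact hmotzkin.add ((isHomogeneous_C _ ε).mul ((((hX 0 2).add (hX 1 2)).add (hX 2 2)).pow 3))

theorem eval_perturbedMotzkin (ε : ℝ) (x : Fin 3 → ℝ) : eval x (perturbedMotzkin ε) =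
    x 0 ^ 4 * x 1 ^ 2 + x 0 ^ 2 * x 1 ^ 4 - 3 * x 0 ^ 2 * x 1 ^ 2 * x 2 ^ 2 + x 2 ^ 6
      + ε * (x 0 ^ 2 + x 1 ^ 2 + x 2 ^ 2) ^ 3 := by
  simp [perturbedMotzkin, motzkin]

theorem eval_perturbedMotzkin_pos {ε : ℝ} (hε : 0 < ε) {x : Fin 3 → ℝ} (hx : x ≠ 0) :
    0 < eval x (perturbedMotzkin ε) := by
  have hnorm : 0 < x 0 ^ 2 + x 1 ^ 2 + x 2 ^ 2 := by
    by_contra! h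
    refine hx (funext fun i => ?_)
    fin_cases i <;> simp <;> nlinarith [sq_nonneg (x 0), sq_nonneg (x 1), sq_nonneg (x 2)]
  rw [eval_perturbedMotzkin]
  linarith [motzkin_nonneg (x 0) (x 1) (x 2), mul_pos hε (pow_pos hnorm 3)]

noncomputable def motzkinSeparator : MvPolynomial (Fin 3) ℝ →ₗ[ℝ] ℝ where
  toFun p := 51 / 2 * (eval ![1, 0, 0] p + eval ![0, 1, 0] p) - 8 / 81 * eval ![0, 0, 1] p
    - 17 / 24 * (eval ![1, 1, 0] p + eval ![1, -1, 0] p)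
    + 1 / 324 * (eval ![3, 0, 2] p + eval ![3, 0, -2] p + eval ![0, 3, 2] p + eval ![0, 3, -2] p)
    + 1 / 1296 * (eval ![3, 3, 2] p + eval ![3, -3, 2] p + eval ![3, 3, -2] p
      + eval ![3, -3, -2] p)
  map_add' p q := by simp only [map_add]; ring
  map_smul' c p := by simp only [smul_eval, RingHom.id_apply, smul_eq_mul]; ring

theorem motzkinSeparator_cubic_sq (a b c d e f g h k j : ℝ) :
    motzkinSeparator ((C a * X 0 ^ 3 + C b * X 1 ^ 3 + C c * X 2 ^ 3 + C d * X 0 ^ 2 * X 1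
      + C e * X 0 * X 1 ^ 2 + C f * X 0 ^ 2 * X 2 + C g * X 1 ^ 2 * X 2
      + C h * X 0 * X 2 ^ 2 + C k * X 1 * X 2 ^ 2 + C j * X 0 * X 1 * X 2) ^ 2) =
      5 / 6 * (a + e + 6 / 5 * h) ^ 2 + 2 / 15 * (15 * a + h) ^ 2
      + 5 / 6 * (b + d + 6 / 5 * k) ^ 2 + 2 / 15 * (15 * b + k) ^ 2
      + 2 * (f + g + 2 / 3 * c) ^ 2 + (f - g) ^ 2 + j ^ 2 := by
  simp only [motzkinSeparator, LinearMap.coe_mk, AddHom.coe_mk, map_pow, map_add, map_mul,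
    eval_C, eval_X, Matrix.cons_val_zero, Matrix.cons_val_one, Matrix.cons_val]
  ring

theorem motzkinSeparator_sq_nonneg {r : MvPolynomial (Fin 3) ℝ} (hr : r.IsHomogeneous 3) :
    0 ≤ motzkinSeparator (r ^ 2) := by
  obtain ⟨a, b, c, d, e, f, g, h, k, j, rfl⟩ := hr.exists_eq_cubic
  rw [motzkinSeparator_cubic_sq]
  positivity

theorem motzkinSeparator_perturbedMotzkin (ε : ℝ) :
    motzkinSeparator (perturbedMotzkin ε) = -4 / 9 + 896 / 9 * ε := by
  simp only [motzkinSeparator, LinearMap.coe_mk, AddHom.coe_mk, eval_perturbedMotzkin,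
    Matrix.cons_val_zero, Matrix.cons_val_one, Matrix.cons_val]
  ring

theorem not_isSOS_perturbedMotzkin {ε : ℝ} (hε : ε < 1 / 224) :
    ¬ IsSOS (perturbedMotzkin ε) := by
  rintro ⟨m, q, hq⟩
  have hcubic := (isHomogeneous_perturbedMotzkin ε).eq_sum_sq_homogeneousComponent (d := 3) hq
  have hnonneg : 0 ≤ motzkinSeparator (perturbedMotzkin ε) := by
    rw [hcubic, map_sum]
    exact Finset.sum_nonneg fun i _ =>
      motzkinSeparator_sq_nonneg (homogeneousComponent_isHomogeneous 3 (q i))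
  rw [motzkinSeparator_perturbedMotzkin] at hnonneg
  linarith

/-- There is a positive definite homogeneous polynomial in three variables that is not a
sum of squares, e.g. `x₁⁴x₂² + x₁²x₂⁴ − 3x₁²x₂²x₃² + x₃⁶ + (1/250)(x₁²+x₂²+x₃²)³`. -/
theorem exists_posdef_homogeneous_not_sos :
    ∃ V : MvPolynomial (Fin 3) ℝ,
      V = X 0 ^ 4 * X 1 ^ 2 + X 0 ^ 2 * X 1 ^ 4 - 3 * X 0 ^ 2 * X 1 ^ 2 * X 2 ^ 2
          + X 2 ^ 6 + C (1 / 250 : ℝ) * (X 0 ^ 2 + X 1 ^ 2 + X 2 ^ 2) ^ 3 ∧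
      V.IsHomogeneous 6 ∧
      (∀ x : Fin 3 → ℝ, x ≠ 0 → 0 < eval x V) ∧
      ¬ IsSOS V :=
  ⟨perturbedMotzkin (1 / 250), rfl, isHomogeneous_perturbedMotzkin _,
    fun _ hx => eval_perturbedMotzkin_pos (by norm_num) hx,
    not_isSOS_perturbedMotzkin (by norm_num)⟩
end

section
/- If p is a polynomial whose top homogeneous component is positive definite, then p is radially unbounded, i.e., p(x) → ∞ as ‖x‖ → ∞. -/
/-!
Write `p = q + r`, where `q` is the top homogeneous component, of degree `d ≥ 1`, and `r` collects
the components of lower degree. By homogeneity `q(x) = ‖x‖ ^ d * q(x / ‖x‖)`, so the minimum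
`ε > 0` of `q` on the compact unit sphere gives `q(x) ≥ ε ‖x‖ ^ d`; in the same way each component
of degree `i < d` is `O(‖x‖ ^ i) = o(‖x‖ ^ d)`. Hence `p(x) ≥ (ε / 2) ‖x‖ ^ d` for large `‖x‖`.
-/

open MvPolynomial Filter Asymptotics Bornology

theorem inv_norm_smul_mem_unitSphere {E : Type*} [NormedAddCommGroup E] [NormedSpace ℝ E]
    {x : E} (hx : x ≠ 0) : ‖x‖⁻¹ • x ∈ Metric.sphere (0 : E) 1 := by
  rw [mem_sphere_zero_iff_norm, norm_smul, norm_inv, norm_norm,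
    inv_mul_cancel₀ (norm_ne_zero_iff.2 hx)]

namespace MvPolynomial

variable {σ : Type*}

theorem IsHomogeneous.eval_smul {R : Type*} [CommSemiring R] {φ : MvPolynomial σ R} {m : ℕ}
    (hφ : φ.IsHomogeneous m) (c : R) (x : σ → R) :
    eval (c • x) φ = c ^ m * eval x φ := by
  simp only [eval_eq, Finset.mul_sum]
  refine Finset.sum_congr rfl fun e he => ?_
  simp only [Pi.smul_apply, smul_eq_mul, mul_pow, Finset.prod_mul_distrib,
    Finset.prod_pow_eq_pow_sum, ← hφ.degree_eq_sum_deg_support he]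
  ring

section Real

variable [Fintype σ] {φ : MvPolynomial σ ℝ} {m : ℕ}

theorem IsHomogeneous.eval_eq_norm_pow_mul (hφ : φ.IsHomogeneous m) {x : σ → ℝ} (hx : x ≠ 0) :
    eval x φ = ‖x‖ ^ m * eval (‖x‖⁻¹ • x) φ := by
  rw [← hφ.eval_smul, smul_inv_smul₀ (norm_ne_zero_iff.2 hx)]

theorem IsHomogeneous.isBigO_eval (hφ : φ.IsHomogeneous m) :
    (fun x => eval x φ) =O[cobounded (σ → ℝ)] fun x => ‖x‖ ^ m := by
  obtain ⟨C, hC⟩ := (isCompact_sphere (0 : σ → ℝ) 1).exists_bound_of_continuousOn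
    (continuous_eval φ).continuousOn
  refine IsBigO.of_bound C ((eventually_ne_cobounded 0).mono fun x hx => ?_)
  rw [hφ.eval_eq_norm_pow_mul hx, norm_mul, norm_pow, norm_norm, mul_comm]
  exact mul_le_mul_of_nonneg_right (hC _ (inv_norm_smul_mem_unitSphere hx)) (by positivity)

theorem IsHomogeneous.exists_pos_mul_norm_pow_le_eval (hφ : φ.IsHomogeneous m)
    (hpos : ∀ x ≠ 0, 0 < eval x φ) : ∃ ε > 0, ∀ x ≠ 0, ε * ‖x‖ ^ m ≤ eval x φ := by
  obtain ⟨ε, hε, hmin⟩ := (isCompact_sphere (0 : σ → ℝ) 1).exists_forall_le'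
    (continuous_eval φ).continuousOn fun u hu => hpos u (ne_zero_of_mem_unit_sphere ⟨u, hu⟩)
  refine ⟨ε, hε, fun x hx => ?_⟩
  rw [hφ.eval_eq_norm_pow_mul hx, mul_comm]
  exact mul_le_mul_of_nonneg_left (hmin _ (inv_norm_smul_mem_unitSphere hx)) (by positivity)

theorem tendsto_eval_cobounded_atTop (p : MvPolynomial σ ℝ) (hd : 0 < p.totalDegree)
    (hpos : ∀ x ≠ 0, 0 < eval x (homogeneousComponent p.totalDegree p)) :
    Tendsto (fun x => eval x p) (cobounded (σ → ℝ)) atTop := by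
  set d := p.totalDegree
  obtain ⟨ε, hε, htop⟩ :=
    (homogeneousComponent_isHomogeneous d p).exists_pos_mul_norm_pow_le_eval hpos
  have hsplit (x : σ → ℝ) : eval x p =
      ∑ i ∈ Finset.range d, eval x (homogeneousComponent i p) +
        eval x (homogeneousComponent d p) := by
    simpa only [Finset.sum_range_succ, map_add, map_sum] using
      congrArg (eval x) (sum_homogeneousComponent p).symm
  have hlower : (fun x => ∑ i ∈ Finset.range d, eval x (homogeneousComponent i p))
      =o[cobounded (σ → ℝ)] fun x => ‖x‖ ^ d :=
    IsLittleO.fun_sum fun i hi =>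
      (homogeneousComponent_isHomogeneous i p).isBigO_eval.trans_isLittleO
        ((isLittleO_pow_pow_atTop_of_lt (Finset.mem_range.1 hi)).comp_tendsto
          tendsto_norm_cobounded_atTop)
  refine tendsto_atTop_mono' _ ?_ (((tendsto_pow_atTop hd.ne').comp
    tendsto_norm_cobounded_atTop).const_mul_atTop (half_pos hε))
  filter_upwards [hlower.bound (half_pos hε), eventually_ne_cobounded 0] with x hsmall hx
  rw [Real.norm_eq_abs, norm_pow, norm_norm] at hsmall
  have := htop x hx
  have := neg_le_of_abs_le hsmall
  rw [Function.comp_apply, hsplit]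
  linarith

end Real

end MvPolynomial

/-- If the top homogeneous component of a polynomial `p` is positive definite, then `p`
is radially unbounded: `p(x) → ∞` as `‖x‖ → ∞`. -/
theorem radially_unbounded_of_thc_posdef (n : ℕ) (p : MvPolynomial (Fin n) ℝ)
    (h0 : eval (0 : Fin n → ℝ) (homogeneousComponent p.totalDegree p) = 0)
    (hpos : ∀ x : Fin n → ℝ, x ≠ 0 →
      0 < eval x (homogeneousComponent p.totalDegree p)) :
    ∀ M : ℝ, ∃ R : ℝ, ∀ x : Fin n → ℝ, R < ‖x‖ → M < eval x p := by
  intro M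
  rcases Nat.eq_zero_or_pos p.totalDegree with hd | hd
  · -- the top component is the constant `0`, so `hpos` forces every `x` to vanish
    simp only [hd, homogeneousComponent_zero, eval_C] at h0 hpos
    have hzero (x : Fin n → ℝ) : x = 0 := by_contra fun hx => (hpos x hx).ne' h0
    exact ⟨0, fun x hx => absurd hx (by simp [hzero x])⟩
  · obtain ⟨R, -, hR⟩ := (atTop_basis_Ioi.cobounded_of_norm.tendsto_iff atTop_basis_Ioi).1
      (tendsto_eval_cobounded_atTop p hd hpos) M trivial
    exact ⟨R, hR⟩
end
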